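/- arXiv:1808.07566 — 4 statements merged into one kernel-verified Lean document; each statement's English description precedes it below -/
import Mathlib

section
/- Let (x, z, θ) be a solution on an interval of the generating-curve system with θ(0) = π/2. Then for all s in the domain (with −s also in the domain), x(s) = x(−s), z(s) + z(−s) = 2 z(0), and θ(s) + θ(−s) = π. In particular the graph of the generating curve is symmetric about the horizontal line z = z(0). -/
/-!
The equation for `z` decouples, so the system is an autonomous ODE for `(x, θ)` whose vector
field `(cos θ, a sin θ / x + b)` is `C¹`, hence locally Lipschitz, on the half-plane `x > 0`.
The reflected curve `s ↦ (x (-s), π - θ (-s))` solves the same ODE, and `θ (0) = π / 2` makes it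
start at the same point, so by uniqueness `x` is even and `θ (s) + θ (-s) = π`. Then `sin θ` is
even, so `z (s) + z (-s)` has zero derivative and equals `2 z (0)`.
-/

open Real Set

theorem ODE_solution_unique_of_locallyLipschitzOn_of_mem_Ioo {E : Type*}
    [NormedAddCommGroup E] [NormedSpace ℝ E] {v : E → E} {U : Set E}
    (hv : LocallyLipschitzOn U v) {f g : ℝ → E} {a b t₀ : ℝ} (ht₀ : t₀ ∈ Ioo a b)
    (hf : ∀ t ∈ Ioo a b, HasDerivAt f (v (f t)) t ∧ f t ∈ U)
    (hg : ∀ t ∈ Ioo a b, HasDerivAt g (v (g t)) t ∧ g t ∈ U)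
    (heq : f t₀ = g t₀) : EqOn f g (Ioo a b) := by
  intro t ht
  obtain ⟨a', ha, ha'⟩ := exists_between (lt_min ht.1 ht₀.1)
  obtain ⟨b', hb', hb⟩ := exists_between (max_lt ht.2 ht₀.2)
  have hsub : Icc a' b' ⊆ Ioo a b := Icc_subset_Ioo ha hb
  have hcont {h : ℝ → E} (hh : ∀ t ∈ Ioo a b, HasDerivAt h (v (h t)) t ∧ h t ∈ U) :
      ContinuousOn h (Icc a' b') :=
    fun t ht ↦ (hh t (hsub ht)).1.continuousAt.continuousWithinAt
  have hmaps {h : ℝ → E} (hh : ∀ t ∈ Ioo a b, HasDerivAt h (v (h t)) t ∧ h t ∈ U) :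
      h '' Icc a' b' ⊆ U :=
    image_subset_iff.2 fun t ht ↦ (hh t (hsub ht)).2
  -- on the compact set swept out by both solutions, `v` is Lipschitz
  obtain ⟨K, hK⟩ := LocallyLipschitzOn.exists_lipschitzOnWith_of_compact
    ((isCompact_Icc.image_of_continuousOn (hcont hf)).union
      (isCompact_Icc.image_of_continuousOn (hcont hg)))
    (hv.mono (union_subset (hmaps hf) (hmaps hg)))
  exact ODE_solution_unique_of_mem_Ioo (a := a') (b := b') (fun _ _ ↦ hK)
    ⟨ha'.trans_le (min_le_right _ _), (le_max_right _ _).trans_lt hb'⟩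
    (fun s hs ↦ ⟨(hf s (hsub (Ioo_subset_Icc_self hs))).1,
      .inl (mem_image_of_mem f (Ioo_subset_Icc_self hs))⟩)
    (fun s hs ↦ ⟨(hg s (hsub (Ioo_subset_Icc_self hs))).1,
      .inr (mem_image_of_mem g (Ioo_subset_Icc_self hs))⟩) heq
    ⟨ha'.trans_le (min_le_left _ _), (le_max_left _ _).trans_lt hb'⟩

theorem add_comp_neg_eq_two_mul_of_hasDerivAt {f f' : ℝ → ℝ} {ε : ℝ}
    (hf : ∀ s ∈ Ioo (-ε) ε, HasDerivAt f (f' s) s) (hf' : ∀ s ∈ Ioo (-ε) ε, f' (-s) = f' s) :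
    ∀ s ∈ Ioo (-ε) ε, f s + f (-s) = 2 * f 0 := by
  have hderiv : ∀ s ∈ Ioo (-ε) ε, HasDerivAt (fun t ↦ f t + f (-t)) 0 s := fun s hs ↦ by
    have hs' : -s ∈ Ioo (-ε) ε := ⟨neg_lt_neg hs.2, neg_lt.1 hs.1⟩
    exact ((hf s hs).add ((hf (-s) hs').comp s (hasDerivAt_neg s))).congr_deriv
      (by simp [hf' s hs])
  intro s hs
  have h0 : (0 : ℝ) ∈ Ioo (-ε) ε := by constructor <;> linarith [hs.1, hs.2]
  simpa [two_mul] using isOpen_Ioo.is_const_of_deriv_eq_zero isPreconnected_Ioo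
    (fun t ht ↦ (hderiv t ht).differentiableAt.differentiableWithinAt)
    (fun t ht ↦ (hderiv t ht).deriv) hs h0

noncomputable def generatingField (a b : ℝ) (p : ℝ × ℝ) : ℝ × ℝ :=
  (cos p.2, a * sin p.2 / p.1 + b)

theorem locallyLipschitzOn_generatingField (a b : ℝ) :
    LocallyLipschitzOn {p : ℝ × ℝ | 0 < p.1} (generatingField a b) :=
  ContDiffOn.locallyLipschitzOn (convex_halfSpace_gt (LinearMap.fst ℝ ℝ ℝ).isLinear 0) <| by
    unfold generatingField
    fun_prop (disch := exact fun p hp ↦ hp.ne')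

theorem hasDerivAt_generatingField_reflect {a b t : ℝ} {x θ : ℝ → ℝ}
    (hx : HasDerivAt x (cos (θ (-t))) (-t))
    (hθ : HasDerivAt θ (a * sin (θ (-t)) / x (-t) + b) (-t)) :
    HasDerivAt (fun s ↦ (x (-s), π - θ (-s))) (generatingField a b (x (-t), π - θ (-t))) t := by
  refine ((hx.comp t (hasDerivAt_neg t)).prodMk
    ((hθ.comp t (hasDerivAt_neg t)).const_sub π)).congr_deriv ?_
  unfold generatingField
  rw [cos_pi_sub, sin_pi_sub]
  ext <;> simp

theorem horizontal_symmetry_general (a b ε : ℝ) (x z θ : ℝ → ℝ)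
    (hx_pos : ∀ s ∈ Ioo (-ε) ε, 0 < x s)
    (hx : ∀ s ∈ Ioo (-ε) ε, HasDerivAt x (Real.cos (θ s)) s)
    (hz : ∀ s ∈ Ioo (-ε) ε, HasDerivAt z (Real.sin (θ s)) s)
    (hθ : ∀ s ∈ Ioo (-ε) ε, HasDerivAt θ (a * Real.sin (θ s) / x s + b) s)
    (hθ0 : θ 0 = π / 2) :
    ∀ s ∈ Ioo (-ε) ε,
      x s = x (-s) ∧ z s + z (-s) = 2 * z 0 ∧ θ s + θ (-s) = π := by
  have hneg {s} (hs : s ∈ Ioo (-ε) ε) : -s ∈ Ioo (-ε) ε := ⟨neg_lt_neg hs.2, neg_lt.1 hs.1⟩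
  have hreflect : ∀ s ∈ Ioo (-ε) ε, x s = x (-s) ∧ θ s = π - θ (-s) := fun s hs ↦ by
    have h0 : (0 : ℝ) ∈ Ioo (-ε) ε := by constructor <;> linarith [hs.1, hs.2]
    have := ODE_solution_unique_of_locallyLipschitzOn_of_mem_Ioo
      (locallyLipschitzOn_generatingField a b) h0
      (fun t ht ↦ ⟨(hx t ht).prodMk (hθ t ht), hx_pos t ht⟩)
      (fun t ht ↦ ⟨hasDerivAt_generatingField_reflect (hx (-t) (hneg ht)) (hθ (-t) (hneg ht)),
        hx_pos (-t) (hneg ht)⟩)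
      (by simp only [neg_zero, hθ0]; ring_nf) hs
    exact Prod.ext_iff.1 this
  refine fun s hs ↦ ⟨(hreflect s hs).1, ?_, by linarith [(hreflect s hs).2]⟩
  refine add_comp_neg_eq_two_mul_of_hasDerivAt hz (fun t ht ↦ ?_) s hs
  rw [← sin_pi_sub, ← (hreflect t ht).2]

/-- if the generating curve is vertical at s = 0 (θ(0) = π/2), the
solution is symmetric about the horizontal line z = z(0). -/
theorem horizontal_symmetry (a b ε : ℝ) (hε : 0 < ε) (x z θ : ℝ → ℝ)
    (hx_pos : ∀ s ∈ Ioo (-ε) ε, 0 < x s)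
    (hx : ∀ s ∈ Ioo (-ε) ε, HasDerivAt x (Real.cos (θ s)) s)
    (hz : ∀ s ∈ Ioo (-ε) ε, HasDerivAt z (Real.sin (θ s)) s)
    (hθ : ∀ s ∈ Ioo (-ε) ε, HasDerivAt θ (a * Real.sin (θ s) / x s + b) s)
    (hθ0 : θ 0 = π / 2) :
    ∀ s ∈ Ioo (-ε) ε,
      x s = x (-s) ∧ z s + z (-s) = 2 * z 0 ∧ θ s + θ (-s) = π :=
  horizontal_symmetry_general a b ε x z θ hx_pos hx hz hθ hθ0
end

section
/- Let a ≠ 0 and let x : I → ℝ be a positive C² function satisfying x·x'' = −a·(1 − (x')²) on an open interval I (the profile equation for κ₁ = a κ₂). Then there exists a constant m ∈ ℝ such that (x'(s))² = 1 + m·x(s)^{2a} for all s ∈ I. -/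
open Real Set

noncomputable def profileFirstIntegral (a : ℝ) (x x' : ℝ → ℝ) (s : ℝ) : ℝ :=
  (x' s ^ 2 - 1) * x s ^ (-(2 * a))

/-- The derivative of `profileFirstIntegral` is `2 x' x^(-2a-1) (x x'' + a (1 - x'²))`, which the
profile equation kills. -/
theorem hasDerivAt_profileFirstIntegral {a s : ℝ} {x x' x'' : ℝ → ℝ} (hxs : 0 < x s)
    (hx : HasDerivAt x (x' s) s) (hx' : HasDerivAt x' (x'' s) s)
    (heq : x s * x'' s = -a * (1 - x' s ^ 2)) :
    HasDerivAt (profileFirstIntegral a x x') 0 s := by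
  have hsq : HasDerivAt (fun t => x' t ^ 2 - 1) (2 * x' s * x'' s) s := by
    simpa using (hx'.pow 2).sub_const 1
  have hpow : HasDerivAt (fun t => x t ^ (-(2 * a)))
      (x' s * -(2 * a) * (x s ^ (-(2 * a)) / x s)) s := by
    simpa [rpow_sub hxs] using hx.rpow_const (p := -(2 * a)) (Or.inl hxs.ne')
  refine (hsq.mul hpow).congr_deriv ?_
  field_simp
  linear_combination 2 * x' s * x s ^ (-(2 * a)) * heq

theorem IsOpen.exists_forall_profileFirstIntegral_eq {a : ℝ} {U : Set ℝ} (hU : IsOpen U)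
    (hU' : IsPreconnected U) {x x' x'' : ℝ → ℝ} (hx_pos : ∀ s ∈ U, 0 < x s)
    (hx : ∀ s ∈ U, HasDerivAt x (x' s) s) (hx' : ∀ s ∈ U, HasDerivAt x' (x'' s) s)
    (heq : ∀ s ∈ U, x s * x'' s = -a * (1 - x' s ^ 2)) :
    ∃ m, ∀ s ∈ U, profileFirstIntegral a x x' s = m := by
  have hderiv : ∀ s ∈ U, HasDerivAt (profileFirstIntegral a x x') 0 s := fun s hs =>
    hasDerivAt_profileFirstIntegral (hx_pos s hs) (hx s hs) (hx' s hs) (heq s hs)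
  exact hU.exists_is_const_of_deriv_eq_zero hU'
    (fun s hs => (hderiv s hs).differentiableAt.differentiableWithinAt)
    (fun s hs => (hderiv s hs).deriv)

theorem eq_one_add_mul_rpow_of_mul_rpow_neg_eq {p y c m : ℝ} (hy : 0 < y)
    (h : (p - 1) * y ^ (-c) = m) : p = 1 + m * y ^ c := by
  rw [← h, rpow_neg hy.le]
  field_simp [(rpow_pos_of_pos hy c).ne']
  ring

theorem first_integral_general (a : ℝ) (α β : ℝ)
    (x x' x'' : ℝ → ℝ)
    (hx_pos : ∀ s ∈ Ioo α β, 0 < x s)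
    (hx : ∀ s ∈ Ioo α β, HasDerivAt x (x' s) s)
    (hx' : ∀ s ∈ Ioo α β, HasDerivAt x' (x'' s) s)
    (heq : ∀ s ∈ Ioo α β, x s * x'' s = -a * (1 - (x' s) ^ 2)) :
    ∃ m : ℝ, ∀ s ∈ Ioo α β, (x' s) ^ 2 = 1 + m * x s ^ (2 * a : ℝ) := by
  obtain ⟨m, hm⟩ :=
    isOpen_Ioo.exists_forall_profileFirstIntegral_eq isPreconnected_Ioo hx_pos hx hx' heq
  exact ⟨m, fun s hs => eq_one_add_mul_rpow_of_mul_rpow_neg_eq (hx_pos s hs) (hm s hs)⟩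

/-- first integral of the profile equation x·x'' = -a(1 - x'²):
there is a constant m with (x')² = 1 + m·x^(2a). -/
theorem first_integral (a : ℝ) (ha : a ≠ 0) (α β : ℝ) (hαβ : α < β)
    (x x' x'' : ℝ → ℝ)
    (hx_pos : ∀ s ∈ Ioo α β, 0 < x s)
    (hx : ∀ s ∈ Ioo α β, HasDerivAt x (x' s) s)
    (hx' : ∀ s ∈ Ioo α β, HasDerivAt x' (x'' s) s)
    (heq : ∀ s ∈ Ioo α β, x s * x'' s = -a * (1 - (x' s) ^ 2)) :
    ∃ m : ℝ, ∀ s ∈ Ioo α β, (x' s) ^ 2 = 1 + m * x s ^ (2 * a : ℝ) :=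
  first_integral_general a α β x x' x'' hx_pos hx hx' heq
end

section
/- Let a < 0 and let (x, z, θ) solve the generating-curve system with b > 0. At any critical point s₁ of θ with θ(s₁) ∈ (0, π/2), one has θ''(s₁) = −a sin θ(s₁) cos θ(s₁)/x(s₁)² > 0; hence every interior critical point of θ in that angular range is a strict local minimum. -/
open Real

/-- for a < 0, at any critical point s₁ of θ with
θ(s₁) ∈ (0, π/2), one has θ''(s₁) = -a sin θ(s₁) cos θ(s₁)/x(s₁)² > 0, so s₁ is
a strict local minimum of θ. -/
theorem critical_point_is_min (a b s₁ D : ℝ) (ha : a < 0) (hb : 0 < b)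
    (x z θ : ℝ → ℝ)
    (hx_pos : ∀ s, 0 < x s)
    (hx : ∀ s, HasDerivAt x (Real.cos (θ s)) s)
    (hz : ∀ s, HasDerivAt z (Real.sin (θ s)) s)
    (hθ : ∀ s, HasDerivAt θ (a * Real.sin (θ s) / x s + b) s)
    (hcrit : a * Real.sin (θ s₁) / x s₁ + b = 0)
    (hrange : θ s₁ ∈ Set.Ioo 0 (π / 2))
    (hD : HasDerivAt (fun s => a * Real.sin (θ s) / x s + b) D s₁) :
    D = -a * Real.sin (θ s₁) * Real.cos (θ s₁) / (x s₁) ^ 2 ∧ 0 < D ∧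
    IsLocalMin θ s₁ := by
  obtain ⟨h0, h1⟩ := hrange
  have hsin : 0 < Real.sin (θ s₁) := Real.sin_pos_of_pos_of_lt_pi h0 (lt_trans h1 (by linarith [Real.pi_pos]))
  have hcos : 0 < Real.cos (θ s₁) := Real.cos_pos_of_mem_Ioo ⟨by linarith [Real.pi_pos], h1⟩
  have hxpos := hx_pos s₁
  have hxne : x s₁ ≠ 0 := ne_of_gt hxpos
  -- θ' at s₁ is 0
  have hθ0 : HasDerivAt θ 0 s₁ := hcrit ▸ hθ s₁
  have hsinθ : HasDerivAt (fun s => Real.sin (θ s)) (Real.cos (θ s₁) * 0) s₁ :=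
    (Real.hasDerivAt_sin (θ s₁)).comp s₁ hθ0
  have hnum : HasDerivAt (fun s => a * Real.sin (θ s)) (a * (Real.cos (θ s₁) * 0)) s₁ :=
    hsinθ.const_mul a
  have hquot : HasDerivAt (fun s => a * Real.sin (θ s) / x s)
      ((a * (Real.cos (θ s₁) * 0) * x s₁ - a * Real.sin (θ s₁) * Real.cos (θ s₁)) / (x s₁) ^ 2) s₁ :=
    hnum.div (hx s₁) hxne
  have hD' : HasDerivAt (fun s => a * Real.sin (θ s) / x s + b)
      ((a * (Real.cos (θ s₁) * 0) * x s₁ - a * Real.sin (θ s₁) * Real.cos (θ s₁)) / (x s₁) ^ 2) s₁ :=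
    hquot.add_const b
  have hDeq : D = -a * Real.sin (θ s₁) * Real.cos (θ s₁) / (x s₁) ^ 2 := by
    have := hD.unique hD'
    rw [this]; ring
  have hDpos : 0 < D := by
    rw [hDeq]
    apply div_pos
    · have : 0 < -a := by linarith
      positivity
    · positivity
  refine ⟨hDeq, hDpos, ?_⟩
  -- sign of f = a sin θ / x + b near s₁
  set f : ℝ → ℝ := fun s => a * Real.sin (θ s) / x s + b with hf
  have hf0 : f s₁ = 0 := hcrit
  have hslope : Filter.Tendsto (slope f s₁) (nhdsWithin s₁ {s₁}ᶜ) (nhds D) :=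
    hasDerivAt_iff_tendsto_slope.mp hD
  have hev : ∀ᶠ s in nhdsWithin s₁ {s₁}ᶜ, 0 < slope f s₁ s :=
    hslope.eventually (eventually_gt_nhds hDpos)
  have hderivθ : ∀ s, deriv θ s = f s := fun s => (hθ s).deriv
  have hleft : ∀ᶠ s in nhdsWithin s₁ (Set.Iio s₁), deriv θ s ≤ 0 := by
    have := nhdsWithin_mono s₁ (fun t (ht : t ∈ Set.Iio s₁) => (ne_of_lt ht : t ≠ s₁)) hev
    filter_upwards [this, self_mem_nhdsWithin] with s hs hs'
    rw [hderivθ]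
    have hslt : s - s₁ < 0 := sub_neg.mpr hs'
    rw [slope_def_field] at hs
    rcases div_pos_iff.mp hs with ⟨_, h2⟩ | ⟨h1, _⟩
    · linarith
    · linarith [hf0]
  have hright : ∀ᶠ s in nhdsWithin s₁ (Set.Ioi s₁), 0 ≤ deriv θ s := by
    have := nhdsWithin_mono s₁ (fun t (ht : t ∈ Set.Ioi s₁) => (ne_of_gt ht : t ≠ s₁)) hev
    filter_upwards [this, self_mem_nhdsWithin] with s hs hs'
    rw [hderivθ]
    have hslt : 0 < s - s₁ := sub_pos.mpr hs'
    rw [slope_def_field] at hs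
    rcases div_pos_iff.mp hs with ⟨h1, _⟩ | ⟨_, h2⟩
    · linarith [hf0]
    · linarith
  exact isLocalMin_of_deriv (hθ s₁).continuousAt
    (Filter.Eventually.of_forall fun s => (hθ s).differentiableAt) hleft hright
end

section
/- Let a < 0 and let (x, z, θ) solve x' = cos θ, z' = sin θ, θ' = a sin θ/x with x > 0 and θ strictly decreasing with θ(s) → θ₁ ≥ 0 as s → ∞, where x is bounded below by a positive constant via (x')² = 1 + m x^{2a}, m < 0. Then x(s) → ∞ as s → ∞ when θ₁ ∈ [0, π/2) with cos θ₁ > 0; moreover θ'(s) → 0 and θ' is bounded, so the solution is defined on all of ℝ. -/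
/-!
The first integral gives `0 ≤ 1 + m x^{2a}`, and since `m < 0` and `2a < 0` this bounds `x`
below by the positive constant `(-m)^{-1/(2a)}`, so `|θ'| = |a sin θ| / x ≤ |a| (-m)^{1/(2a)}`.
As `s → ∞`, `x' = cos θ → cos θ₁ > 0`, so `x` eventually grows at least linearly and
`θ' → a sin θ₁ / ∞ = 0`.
-/

open Real Filter Topology Set

theorem tendsto_atTop_of_hasDerivAt_of_tendsto_pos {f f' : ℝ → ℝ} {L : ℝ}
    (hf : ∀ s, HasDerivAt f (f' s) s) (hf' : Tendsto f' atTop (𝓝 L)) (hL : 0 < L) :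
    Tendsto f atTop atTop := by
  obtain ⟨s₀, hs₀⟩ := eventually_atTop.mp (hf'.eventually (eventually_ge_nhds (half_lt_self hL)))
  have hdiff : Differentiable ℝ f := fun s => (hf s).differentiableAt
  have hlinear : ∀ s ≥ s₀, f s₀ + L / 2 * (s - s₀) ≤ f s := by
    intro s hs
    have := (convex_Ici s₀).mul_sub_le_image_sub_of_le_deriv hdiff.continuous.continuousOn
      hdiff.differentiableOn (fun t ht => by
        rw [interior_Ici] at ht
        rw [(hf t).deriv]
        exact hs₀ t ht.le) s₀ self_mem_Ici s hs hs
    linarith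
  refine tendsto_atTop_mono' atTop (eventually_atTop.mpr ⟨s₀, hlinear⟩) ?_
  exact tendsto_atTop_add_const_left _ _
    ((tendsto_atTop_add_const_right _ _ tendsto_id).const_mul_atTop (half_pos hL))

theorem inv_neg_rpow_inv_le_of_one_add_mul_rpow_nonneg {p m y : ℝ} (hp : p < 0) (hm : m < 0)
    (hy : 0 < y) (h : 0 ≤ 1 + m * y ^ p) : (-m)⁻¹ ^ p⁻¹ ≤ y := by
  have hneg_m : 0 < -m := neg_pos.mpr hm
  have hyp : y ^ p ≤ (-m)⁻¹ := by
    rw [inv_eq_one_div, le_div_iff₀ hneg_m]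
    linarith
  rwa [← rpow_le_rpow_iff_of_neg hy (by positivity) hp, rpow_inv_rpow (by positivity) hp.ne]

theorem catenoid_asymptotics_general (a m θ₁ : ℝ) (ha : a < 0) (hm : m < 0)
    (x θ : ℝ → ℝ)
    (hx_pos : ∀ s, 0 < x s)
    (hx : ∀ s, HasDerivAt x (Real.cos (θ s)) s)
    (hθlim : Tendsto θ atTop (𝓝 θ₁))
    (hfi : ∀ s, (Real.cos (θ s)) ^ 2 = 1 + m * x s ^ (2 * a : ℝ))
    (hcos : 0 < Real.cos θ₁) :
    Tendsto x atTop atTop ∧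
    Tendsto (fun s => a * Real.sin (θ s) / x s) atTop (𝓝 0) ∧
    ∃ C : ℝ, ∀ s, |a * Real.sin (θ s) / x s| ≤ C := by
  set δ : ℝ := (-m)⁻¹ ^ (2 * a)⁻¹
  have hδ : 0 < δ := rpow_pos_of_pos (inv_pos.mpr (neg_pos.mpr hm)) _
  have hx_ge : ∀ s, δ ≤ x s := fun s =>
    inv_neg_rpow_inv_le_of_one_add_mul_rpow_nonneg (by linarith) hm (hx_pos s)
      (hfi s ▸ sq_nonneg _)
  have hx_top : Tendsto x atTop atTop :=
    tendsto_atTop_of_hasDerivAt_of_tendsto_pos hx ((continuous_cos.tendsto θ₁).comp hθlim) hcos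
  refine ⟨hx_top, (((continuous_sin.tendsto θ₁).comp hθlim).const_mul a).div_atTop hx_top,
    |a| / δ, fun s => ?_⟩
  rw [abs_div, abs_mul, abs_of_pos (hx_pos s)]
  exact div_le_div₀ (abs_nonneg a) (mul_le_of_le_one_right (abs_nonneg a) (abs_sin_le_one _))
    hδ (hx_ge s)

/-- case b = 0, a < 0: if θ strictly decreases to θ₁ with
cos θ₁ > 0 and the first integral (x')² = 1 + m x^(2a) holds with m < 0, then
x → ∞, θ' → 0, and θ' is bounded (so the solution is defined on all of ℝ). -/
theorem catenoid_asymptotics (a m θ₁ : ℝ) (ha : a < 0) (hm : m < 0)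
    (x z θ : ℝ → ℝ)
    (hx_pos : ∀ s, 0 < x s)
    (hx : ∀ s, HasDerivAt x (Real.cos (θ s)) s)
    (hz : ∀ s, HasDerivAt z (Real.sin (θ s)) s)
    (hθ : ∀ s, HasDerivAt θ (a * Real.sin (θ s) / x s) s)
    (hanti : StrictAnti θ)
    (hθlim : Tendsto θ atTop (𝓝 θ₁)) (hθ₁ : 0 ≤ θ₁)
    (hfi : ∀ s, (Real.cos (θ s)) ^ 2 = 1 + m * x s ^ (2 * a : ℝ))
    (hcos : 0 < Real.cos θ₁) :
    Tendsto x atTop atTop ∧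
    Tendsto (fun s => a * Real.sin (θ s) / x s) atTop (𝓝 0) ∧
    ∃ C : ℝ, ∀ s, |a * Real.sin (θ s) / x s| ≤ C :=
  catenoid_asymptotics_general a m θ₁ ha hm x θ hx_pos hx hθlim hfi hcos
end
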